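/- arXiv:1808.01049 — 3 statements merged into one kernel-verified Lean document; each statement's English description precedes it below -/
import Mathlib

section
/- Let k ∈ ℕ and let f : ℍ → ℂ satisfy the weight-2k modular transformation law for the full modular group: for every [[a,b],[c,d]] ∈ SL₂(ℤ) and all τ ∈ ℍ, f((aτ+b)/(cτ+d)) = (cτ+d)^{2k} f(τ). Let d ∈ ℕ⁺, c ∈ ℕ and set g = gcd(d,c). Then there exists an integer y such that for all τ ∈ ℍ, f(dτ/(cτ+1)) = (g/d)^{2k}·(cτ+1)^{2k}·f((g²τ + yg)/d). -/
/-! With `g = gcd(d, c)` and Bézout's identity `g = d A + c y`, the integer matrix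
`γ = (d/g, -y; c/g, A)` is unimodular and satisfies
`γ · (g², y g; 0, d) = g · (d, 0; c, 1)`. Since scalars act trivially on `ℍ`, `γ` maps
`τ' = (g² τ + y g)/d` to `d τ/(c τ + 1)`, and the cocycle relation of the automorphy factor
gives `(c/g) τ' + A = (g/d)(c τ + 1)`. The claim is the transformation law of `f` under `γ`
at `τ'`. -/

open Complex UpperHalfPlane Filter Matrix CongruenceSubgroup
open scoped Real MatrixGroups Manifold

noncomputable section

lemma moebius_im_pos (a b c d : ℝ) (h : 0 < a * d - b * c) {z : ℂ} (hz : 0 < z.im) :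
    0 < (((a : ℂ) * z + b) / ((c : ℂ) * z + d)).im := by
  have hden : ((c : ℂ) * z + d) ≠ 0 := by
    intro h0
    have him : c * z.im = 0 := by
      have := congrArg Complex.im h0
      simpa using this
    have hc : c = 0 := by
      rcases mul_eq_zero.mp him with hc | hzim
      · exact hc
      · exact absurd hzim hz.ne'
    have hd : d = 0 := by
      have := congrArg Complex.re h0
      simpa [hc] using this
    rw [hc, hd] at h
    simp at h
  have him : (((a : ℂ) * z + b) / ((c : ℂ) * z + d)).im
      = (a * d - b * c) * z.im / Complex.normSq ((c : ℂ) * z + d) := by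
    rw [Complex.div_im]
    simp only [Complex.add_im, Complex.add_re, Complex.mul_im, Complex.mul_re,
      Complex.ofReal_re, Complex.ofReal_im, Complex.normSq_apply]
    ring
  rw [him]
  exact div_pos (mul_pos h hz) (Complex.normSq_pos.mpr hden)

/-- The point `(aτ+b)/(cτ+d)` of `ℍ`, for a real matrix of positive determinant. -/
def mkM (a b c d : ℝ) (h : 0 < a * d - b * c) (τ : ℍ) : ℍ :=
  ⟨((a : ℂ) * τ + b) / ((c : ℂ) * τ + d), moebius_im_pos a b c d h τ.im_pos⟩

lemma exists_SL2_mul_eq_gcd_smul (d c : ℤ) :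
    ∃ (γ : SL(2, ℤ)) (y : ℤ),
      (γ : Matrix (Fin 2) (Fin 2) ℤ) * !![(d.gcd c : ℤ) ^ 2, y * d.gcd c; 0, d] =
        (d.gcd c : ℤ) • !![d, 0; c, 1] := by
  rcases eq_or_ne (d.gcd c) 0 with hg | hg
  · obtain ⟨rfl, rfl⟩ := Int.gcd_eq_zero_iff.mp hg
    exact ⟨1, 0, by ext i j; fin_cases i <;> fin_cases j <;> simp⟩
  obtain ⟨a, ha⟩ := Int.gcd_dvd_left d c
  obtain ⟨b, hb⟩ := Int.gcd_dvd_right d c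
  have bezout := Int.gcd_eq_gcd_ab d c
  set g : ℤ := (d.gcd c : ℤ)
  set A := d.gcdA c
  set y := d.gcdB c
  have hdet : a * A + y * b = 1 :=
    mul_left_cancel₀ (Int.natCast_ne_zero.mpr hg)
      (by linear_combination -bezout - A * ha - y * hb)
  refine ⟨⟨!![a, -y; b, A], by rw [det_fin_two_of]; linear_combination hdet⟩, y, ?_⟩
  ext i j; fin_cases i <;> fin_cases j <;> simp [Matrix.mul_apply, Fin.sum_univ_two]
  · linear_combination -g * ha
  · linear_combination -y * ha
  · linear_combination -g * hb
  · linear_combination -y * hb - bezout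

lemma mkM_eq_smul (a b c d : ℝ) (h : 0 < a * d - b * c) (τ : ℍ) :
    mkM a b c d h τ =
      GeneralLinearGroup.mkOfDetNeZero !![a, b; c, d]
        (by rw [det_fin_two_of]; exact h.ne') • τ := by
  ext1
  rw [coe_smul_of_det_pos (by simpa [det_fin_two_of] using h)]
  simp [mkM, num, denom]

lemma smul_smul_of_mul_eq_smul {g h m : GL (Fin 2) ℝ} {s : ℝ} (hs : s ≠ 0)
    (hgh : (g : Matrix (Fin 2) (Fin 2) ℝ) * h = s • (m : Matrix (Fin 2) (Fin 2) ℝ))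
    (z : ℍ) : g • h • z = m • z := by
  have hscalar : g * h = GeneralLinearGroup.scalar (Fin 2) (Units.mk0 s hs) * m := by
    ext1; simp [hgh, Matrix.smul_eq_diagonal_mul]
  rw [smul_smul, hscalar, mul_smul, glScalar_smul]

lemma denom_mul_denom_of_mul_eq_smul {g h m : GL (Fin 2) ℝ} {s : ℝ} (hh : 0 < h.det.val)
    (hgh : (g : Matrix (Fin 2) (Fin 2) ℝ) * h = s • (m : Matrix (Fin 2) (Fin 2) ℝ))
    (z : ℍ) : denom g ↑(h • z) * denom h z = s * denom m z := by
  rw [coe_smul_of_det_pos hh, ← denom_cocycle g h z.im_ne_zero]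
  simp [denom, hgh]
  ring

theorem expansion_of_rescaled_level_one_form (k : ℕ) (f : ℍ → ℂ)
    (hf : ∀ γ : SL(2, ℤ), ∀ τ : ℍ,
      f (γ • τ) = ((γ 1 0 : ℂ) * τ + (γ 1 1 : ℂ)) ^ (2 * k) * f τ)
    (d : ℕ) (hd : 0 < d) (c : ℕ) :
    ∃ y : ℤ, ∀ τ : ℍ,
      f (mkM d 0 c 1 (by simp; exact_mod_cast hd) τ) =
        ((Nat.gcd d c : ℂ) / (d : ℂ)) ^ (2 * k) * ((c : ℂ) * τ + 1) ^ (2 * k) *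
          f (mkM ((Nat.gcd d c : ℝ) ^ 2) ((y : ℝ) * (Nat.gcd d c : ℝ)) 0 d
              (by
                have hg : (0 : ℝ) < (Nat.gcd d c : ℝ) := by
                  exact_mod_cast Nat.gcd_pos_of_pos_left c hd
                have hdr : (0 : ℝ) < (d : ℝ) := by exact_mod_cast hd
                nlinarith [mul_pos (mul_pos hg hg) hdr]) τ) := by
  obtain ⟨γ, y, hγ⟩ := exists_SL2_mul_eq_gcd_smul d c
  refine ⟨y, fun τ => ?_⟩
  rw [mkM_eq_smul, mkM_eq_smul]
  set g := Nat.gcd d c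
  set N := GeneralLinearGroup.mkOfDetNeZero !![(g : ℝ) ^ 2, (y : ℝ) * g; 0, d] _
  set M := GeneralLinearGroup.mkOfDetNeZero !![(d : ℝ), 0; c, 1] _
  have hγℝ : ((γ : GL (Fin 2) ℝ) : Matrix (Fin 2) (Fin 2) ℝ) * N =
      (g : ℝ) • (M : Matrix (Fin 2) (Fin 2) ℝ) := by
    ext i j
    have hij := congr_fun₂ hγ i j
    fin_cases i <;> fin_cases j <;>
      simp [Matrix.mul_apply, Fin.sum_univ_two, N, M] at hij ⊢ <;> exact_mod_cast hij
  have hg : (g : ℝ) ≠ 0 := by exact_mod_cast (Nat.gcd_pos_of_pos_left c hd).ne'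
  have hN : 0 < N.det.val := by simp [N, det_fin_two_of]; positivity
  have hfactor : ((γ 1 0 : ℂ) * ↑(N • τ) + γ 1 1) * d = (g : ℂ) * (c * τ + 1) := by
    simpa [denom, N, M] using denom_mul_denom_of_mul_eq_smul hN hγℝ τ
  rw [← smul_smul_of_mul_eq_smul hg hγℝ]
  change f (γ • N • τ) = _
  rw [hf, ← mul_pow]
  congr 2
  have : (d : ℂ) ≠ 0 := by exact_mod_cast hd.ne'
  field_simp
  linear_combination hfactor
end
end

section
/- Let k ∈ ℕ⁺ and let f : ℍ → ℂ transform with weight 2k−1 and character χ₋₄ under Γ₀(4), i.e. for every [[a,b],[c,d]] ∈ Γ₀(4) and all τ ∈ ℍ, f((aτ+b)/(cτ+d)) = χ₋₄(d)(cτ+d)^{2k−1} f(τ). Let p be an odd prime. Then for all τ ∈ ℍ, f(pτ/(4τ+1)) = χ₋₄(p)·p^{1−2k}·(4τ+1)^{2k−1}·f((4τ − p_χ + 1)/(4p)). -/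
open Complex UpperHalfPlane Filter Matrix CongruenceSubgroup
open scoped Real MatrixGroups Manifold

noncomputable section

/-- The primitive Dirichlet character mod 4: `1` on `1 mod 4`, `-1` on `3 mod 4`, `0` on evens. -/
def chi4 (n : ℤ) : ℤ := if n % 4 = 1 then 1 else if n % 4 = 3 then -1 else 0

/-!
For odd `n` put `χ = χ₋₄(n)` and `b = (χn - 1)/4`. The matrix `γ = [[n, b], [4, χ]]` lies in
`Γ₀(4)`, and at `σ = (4τ - χn + 1)/(4n)` one has `4σ + χ = (4τ + 1)/n` and `nσ + b = τ`, so
`γσ = nτ/(4τ + 1)`. The claim is the transformation law of `f` for `γ` at `σ`, since `χ₋₄(χ) = χ`.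
-/

lemma coe_mkM (a b c d : ℝ) (h : 0 < a * d - b * c) (τ : ℍ) :
    (mkM a b c d h τ : ℂ) = (a * τ + b) / (c * τ + d) := rfl

lemma chi4_eq_one_or_neg_one {n : ℤ} (hn : Odd n) : chi4 n = 1 ∨ chi4 n = -1 := by
  obtain ⟨m, rfl⟩ := hn
  unfold chi4
  split_ifs <;> omega

lemma chi4_chi4 {n : ℤ} (hn : Odd n) : chi4 (chi4 n) = chi4 n := by
  rcases chi4_eq_one_or_neg_one hn with h | h <;> rw [h] <;> decide

lemma four_dvd_chi4_mul_sub_one {n : ℤ} (hn : Odd n) : 4 ∣ chi4 n * n - 1 := by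
  obtain ⟨m, rfl⟩ := hn
  unfold chi4
  split_ifs <;> omega

def chi4Matrix (n : ℤ) (hn : Odd n) : SL(2, ℤ) :=
  ⟨!![n, (chi4 n * n - 1) / 4; 4, chi4 n], by
    rw [Matrix.det_fin_two_of, Int.ediv_mul_cancel (four_dvd_chi4_mul_sub_one hn)]
    ring⟩

section chi4Matrix

variable {n : ℤ} (hn : Odd n)

@[simp] lemma chi4Matrix_zero_zero : chi4Matrix n hn 0 0 = n := rfl

@[simp] lemma chi4Matrix_zero_one : chi4Matrix n hn 0 1 = (chi4 n * n - 1) / 4 := rfl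

@[simp] lemma chi4Matrix_one_zero : chi4Matrix n hn 1 0 = 4 := rfl

@[simp] lemma chi4Matrix_one_one : chi4Matrix n hn 1 1 = chi4 n := rfl

lemma chi4Matrix_mem_Gamma0 : chi4Matrix n hn ∈ Gamma0 4 := by
  rw [Gamma0_mem, chi4Matrix_one_zero]
  decide

lemma four_mul_mkM_add_chi4 (h : 0 < (4 : ℝ) * (4 * n) - (1 - ((chi4 n * n : ℤ) : ℝ)) * 0)
    (τ : ℍ) :
    4 * (mkM 4 (1 - ((chi4 n * n : ℤ) : ℝ)) 0 (4 * n) h τ : ℂ) + chi4 n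
      = (4 * τ + 1) / n := by
  have hn0 : (n : ℂ) ≠ 0 := by
    have : (0 : ℝ) < n := by linarith
    exact_mod_cast this.ne'
  rw [coe_mkM]
  push_cast
  field_simp
  ring

lemma chi4Matrix_smul_mkM (h₁ : 0 < (n : ℝ) * 1 - 0 * 4)
    (h₂ : 0 < (4 : ℝ) * (4 * n) - (1 - ((chi4 n * n : ℤ) : ℝ)) * 0) (τ : ℍ) :
    chi4Matrix n hn • mkM 4 (1 - ((chi4 n * n : ℤ) : ℝ)) 0 (4 * n) h₂ τ = mkM n 0 4 1 h₁ τ := by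
  ext1
  have hn0 : (n : ℂ) ≠ 0 := by
    have : (0 : ℝ) < n := by linarith
    exact_mod_cast this.ne'
  have hb : (((chi4 n * n - 1) / 4 : ℤ) : ℂ) = (chi4 n * n - 1) / 4 := by
    rw [Int.cast_div (four_dvd_chi4_mul_sub_one hn) (by norm_num)]
    push_cast; ring
  have hden := four_mul_mkM_add_chi4 h₂ τ
  rw [coe_specialLinearGroup_apply]
  simp only [chi4Matrix_zero_zero, chi4Matrix_zero_one, chi4Matrix_one_zero, chi4Matrix_one_one,
    algebraMap_int_eq, eq_intCast, Complex.ofReal_intCast]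
  rw [Int.cast_ofNat, hden, hb, coe_mkM, coe_mkM]
  have h4τ : 4 * (τ : ℂ) + 1 ≠ 0 := fun h0 ↦ τ.im_ne_zero (by simpa using congrArg Complex.im h0)
  push_cast
  field_simp
  ring

end chi4Matrix

lemma div_pow_two_mul_sub_one {K : Type*} [Field K] (z x : K) {k : ℕ} (hk : 1 ≤ k) :
    (z / x) ^ (2 * k - 1) = x ^ (1 - 2 * (k : ℤ)) * z ^ (2 * k - 1) := by
  have : 1 - 2 * (k : ℤ) = -((2 * k - 1 : ℕ) : ℤ) := by omega
  rw [this, _root_.zpow_neg, zpow_natCast, div_pow, div_eq_inv_mul]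

theorem expansion_at_cusp_one_fourth (k : ℕ) (hk : 1 ≤ k) (f : ℍ → ℂ)
    (hf : ∀ γ : Gamma0 4, ∀ τ : ℍ,
      f ((γ : SL(2, ℤ)) • τ) =
        (chi4 ((γ : SL(2, ℤ)) 1 1) : ℂ) *
          (((γ : SL(2, ℤ)) 1 0 : ℂ) * τ + ((γ : SL(2, ℤ)) 1 1 : ℂ)) ^ (2 * k - 1) * f τ)
    (p : ℕ) (hp : p.Prime) (hodd : Odd p) :
    ∀ τ : ℍ,
      f (mkM p 0 4 1 (by simp; exact_mod_cast hp.pos) τ) =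
        (chi4 p : ℂ) * (p : ℂ) ^ (1 - 2 * (k : ℤ)) * (4 * (τ : ℂ) + 1) ^ (2 * k - 1) *
          f (mkM 4 (1 - ((chi4 p * p : ℤ) : ℝ)) 0 (4 * p)
              (by
                have hpr : (0 : ℝ) < (p : ℝ) := by exact_mod_cast hp.pos
                nlinarith) τ) := by
  intro τ
  have hn : Odd (p : ℤ) := by exact_mod_cast hodd
  have hpos : (0 : ℝ) < p := by exact_mod_cast hp.pos
  have hact := chi4Matrix_smul_mkM hn (by push_cast; linarith) (by push_cast; linarith) τ
  have hden := four_mul_mkM_add_chi4 (n := p) (by push_cast; linarith) τ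
  simp only [Int.cast_natCast] at hact hden
  rw [← hact, hf ⟨_, chi4Matrix_mem_Gamma0 hn⟩]
  simp only [chi4Matrix_one_one, chi4Matrix_one_zero, chi4_chi4 hn, Int.cast_ofNat,
    hden, div_pow_two_mul_sub_one _ _ hk]
  ring
end
end

section
/- Let p be an odd prime, k ≥ 1 an integer, and 0 ≤ j ≤ 2k. Then the function τ ↦ (τ+1)^{−2k}·φ(τ/(τ+1))^{4k−2j}·φ(pτ/(τ+1))^{2j} tends to (−1)^k/(2^{2k}·p^{j}) as Im τ → ∞. -/
open Complex UpperHalfPlane Filter Matrix CongruenceSubgroup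
open scoped Real MatrixGroups Manifold

noncomputable section

/-- Ramanujan's theta function `φ(z) = Σ_{n ∈ ℤ} exp(2πi n² z)` (convergent on `ℍ`). -/
def phi (z : ℂ) : ℂ := ∑' n : ℤ, Complex.exp (2 * (π : ℂ) * Complex.I * (n : ℂ) ^ 2 * z)

lemma phi_eq_jacobiTheta (z : ℂ) : phi z = jacobiTheta (2 * z) := by
  unfold phi jacobiTheta
  refine tsum_congr fun n => ?_
  ring_nf

lemma jacobiTheta_nat_two_mul_add (n : ℕ) (τ : ℂ) :
    jacobiTheta (2 * n + τ) = jacobiTheta τ := by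
  induction n with
  | zero => simp
  | succ m ih =>
      have h : (2 * ((m : ℂ) + 1) + τ) = 2 + (2 * m + τ) := by ring
      rw [Nat.cast_add, Nat.cast_one, h, jacobiTheta_two_add, ih]

lemma jacobiTheta_neg_inv {w : ℂ} (hw : 0 < w.im) :
    jacobiTheta (-w⁻¹) = (-Complex.I * w) ^ (1 / 2 : ℂ) * jacobiTheta w := by
  have := jacobiTheta_S_smul ⟨w, hw⟩
  rw [UpperHalfPlane.modular_S_smul] at this
  simpa [inv_neg] using this

lemma cpow_half_pow {c : ℂ} (hc : c ≠ 0) (m : ℕ) :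
    (c ^ (1 / 2 : ℂ)) ^ (2 * m) = c ^ m := by
  rw [pow_mul]
  congr 1
  rw [sq, ← cpow_add _ _ hc]
  norm_num

lemma tendsto_jacobiTheta_one :
    Tendsto jacobiTheta (comap Complex.im atTop) (nhds 1) := by
  have h1 : Tendsto (fun τ : ℂ => jacobiTheta τ - 1) (comap Complex.im atTop) (nhds 0) := by
    refine isBigO_at_im_infty_jacobiTheta_sub_one.trans_tendsto ?_
    have him : Tendsto (fun τ : ℂ => τ.im) (comap Complex.im atTop) atTop := tendsto_comap
    have : Tendsto (fun τ : ℂ => -π * τ.im) (comap Complex.im atTop) atBot :=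
      him.const_mul_atTop_of_neg (neg_lt_zero.mpr Real.pi_pos)
    exact Real.tendsto_exp_atBot.comp this
  have := h1.add_const 1
  simpa using this

theorem theta_constant_term_cusp_one (p : ℕ) (hp : p.Prime) (hodd : Odd p)
    (k : ℕ) (hk : 1 ≤ k) (j : ℕ) (hj : j ≤ 2 * k) :
    Tendsto (fun τ : ℍ =>
        phi ((τ : ℂ) / ((τ : ℂ) + 1)) ^ (4 * k - 2 * j) *
          phi ((p : ℂ) * τ / ((τ : ℂ) + 1)) ^ (2 * j) / ((τ : ℂ) + 1) ^ (2 * k))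
      atImInfty (nhds ((-1 : ℂ) ^ k / (2 ^ (2 * k) * (p : ℂ) ^ j))) := by
  have hp0 : (p : ℂ) ≠ 0 := Nat.cast_ne_zero.mpr hp.pos.ne'
  have hpR : (0 : ℝ) < p := Nat.cast_pos.mpr hp.pos
  set C : ℂ := (-1 : ℂ) ^ k / (2 ^ (2 * k) * (p : ℂ) ^ j) with hC
  -- the two auxiliary maps into the upper half-plane
  have himw1 : ∀ τ : ℍ, (0 : ℝ) < (((τ : ℂ) + 1) / 2).im := by
    intro τ
    have : (((τ : ℂ) + 1) / 2) = ((τ : ℂ) + 1) / ((2 : ℝ) : ℂ) := by norm_num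
    rw [this, Complex.div_ofReal_im]
    simp only [Complex.add_im, Complex.one_im, add_zero]
    have := τ.2
    positivity
  have himw2 : ∀ τ : ℍ, (0 : ℝ) < (((τ : ℂ) + 1) / (2 * p)).im := by
    intro τ
    have : (((τ : ℂ) + 1) / (2 * p)) = ((τ : ℂ) + 1) / ((2 * p : ℝ) : ℂ) := by push_cast; ring
    rw [this, Complex.div_ofReal_im]
    simp only [Complex.add_im, Complex.one_im, add_zero]
    have := τ.2
    positivity
  -- pointwise identity
  have key : ∀ τ : ℍ,
      phi ((τ : ℂ) / ((τ : ℂ) + 1)) ^ (4 * k - 2 * j) *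
          phi ((p : ℂ) * τ / ((τ : ℂ) + 1)) ^ (2 * j) / ((τ : ℂ) + 1) ^ (2 * k) =
        C * (jacobiTheta (((τ : ℂ) + 1) / 2) ^ (4 * k - 2 * j) *
          jacobiTheta (((τ : ℂ) + 1) / (2 * p)) ^ (2 * j)) := by
    intro τ
    set z : ℂ := (τ : ℂ) with hz
    have hz1 : z + 1 ≠ 0 := by
      intro h
      have := congrArg Complex.im h
      simp only [Complex.add_im, Complex.one_im, add_zero, Complex.zero_im] at this
      exact (τ.2.ne') (by simpa [hz, UpperHalfPlane.coe_im] using this)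
    set w1 : ℂ := (z + 1) / 2 with hw1
    set w2 : ℂ := (z + 1) / (2 * p) with hw2
    have hw1im : 0 < w1.im := himw1 τ
    have hw2im : 0 < w2.im := himw2 τ
    have hw1ne : w1 ≠ 0 := fun h => (hw1im.ne') (by rw [h]; simp)
    have hw2ne : w2 ≠ 0 := fun h => (hw2im.ne') (by rw [h]; simp)
    have e1 : phi (z / (z + 1)) = (-Complex.I * w1) ^ (1 / 2 : ℂ) * jacobiTheta w1 := by
      rw [phi_eq_jacobiTheta]
      have harg : 2 * (z / (z + 1)) = 2 * (1 : ℕ) + (-w1⁻¹) := by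
        rw [hw1]
        field_simp
        ring
      rw [harg, jacobiTheta_nat_two_mul_add, jacobiTheta_neg_inv hw1im]
    have e2 : phi ((p : ℂ) * z / (z + 1)) = (-Complex.I * w2) ^ (1 / 2 : ℂ) * jacobiTheta w2 := by
      rw [phi_eq_jacobiTheta]
      have harg : 2 * ((p : ℂ) * z / (z + 1)) = 2 * (p : ℕ) + (-w2⁻¹) := by
        rw [hw2]
        field_simp
        ring
      rw [harg, jacobiTheta_nat_two_mul_add, jacobiTheta_neg_inv hw2im]
    have hIw1 : -Complex.I * w1 ≠ 0 := mul_ne_zero (neg_ne_zero.mpr Complex.I_ne_zero) hw1ne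
    have hIw2 : -Complex.I * w2 ≠ 0 := mul_ne_zero (neg_ne_zero.mpr Complex.I_ne_zero) hw2ne
    have hexp : 4 * k - 2 * j = 2 * (2 * k - j) := by omega
    rw [e1, e2, mul_pow, mul_pow, hexp, cpow_half_pow hIw1, cpow_half_pow hIw2, ← hexp]
    -- now pure algebra
    have hconst : (-Complex.I * w1) ^ (2 * k - j) * (-Complex.I * w2) ^ j / (z + 1) ^ (2 * k) = C := by
      have hI : (-Complex.I) ^ (2 * k - j) * (-Complex.I) ^ j = (-1 : ℂ) ^ k := by
        rw [← pow_add]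
        have : 2 * k - j + j = 2 * k := by omega
        rw [this, pow_mul]
        norm_num
      have hsplit : ∀ c : ℂ, c ≠ 0 → c ^ (2 * k) = c ^ (2 * k - j) * c ^ j := by
        intro c _
        rw [← pow_add]
        congr 1
        omega
      rw [mul_pow, mul_pow, hw1, hw2, div_pow, div_pow, hC,
        hsplit (z + 1) hz1, hsplit 2 two_ne_zero]
      field_simp
      rw [mul_pow, ← hI]
      ring
    calc (-Complex.I * w1) ^ (2 * k - j) * jacobiTheta w1 ^ (4 * k - 2 * j) *
          ((-Complex.I * w2) ^ j * jacobiTheta w2 ^ (2 * j)) / (z + 1) ^ (2 * k)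
        = ((-Complex.I * w1) ^ (2 * k - j) * (-Complex.I * w2) ^ j / (z + 1) ^ (2 * k)) *
          (jacobiTheta w1 ^ (4 * k - 2 * j) * jacobiTheta w2 ^ (2 * j)) := by ring
      _ = C * (jacobiTheta w1 ^ (4 * k - 2 * j) * jacobiTheta w2 ^ (2 * j)) := by rw [hconst]
  simp only [funext key]
  -- limits of the theta factors
  have hmap1 : Tendsto (fun τ : ℍ => ((τ : ℂ) + 1) / 2) atImInfty (comap Complex.im atTop) := by
    rw [tendsto_comap_iff]
    have : ∀ τ : ℍ, ((((τ : ℂ) + 1) / 2).im) = τ.im / 2 := by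
      intro τ
      have h2 : (((τ : ℂ) + 1) / 2) = ((τ : ℂ) + 1) / ((2 : ℝ) : ℂ) := by norm_num
      rw [h2, Complex.div_ofReal_im]
      simp [UpperHalfPlane.coe_im]
    simp only [Function.comp_def, this]
    exact (tendsto_comap.atTop_div_const (by norm_num : (0:ℝ) < 2))
  have hmap2 : Tendsto (fun τ : ℍ => ((τ : ℂ) + 1) / (2 * p)) atImInfty (comap Complex.im atTop) := by
    rw [tendsto_comap_iff]
    have : ∀ τ : ℍ, ((((τ : ℂ) + 1) / (2 * p)).im) = τ.im / (2 * p) := by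
      intro τ
      have h2 : (((τ : ℂ) + 1) / (2 * p)) = ((τ : ℂ) + 1) / ((2 * p : ℝ) : ℂ) := by push_cast; ring
      rw [h2, Complex.div_ofReal_im]
      simp [UpperHalfPlane.coe_im]
    simp only [Function.comp_def, this]
    exact (tendsto_comap.atTop_div_const (by positivity))
  have h1 : Tendsto (fun τ : ℍ => jacobiTheta (((τ : ℂ) + 1) / 2)) atImInfty (nhds 1) :=
    tendsto_jacobiTheta_one.comp hmap1
  have h2 : Tendsto (fun τ : ℍ => jacobiTheta (((τ : ℂ) + 1) / (2 * p))) atImInfty (nhds 1) :=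
    tendsto_jacobiTheta_one.comp hmap2
  have := ((h1.pow (4 * k - 2 * j)).mul (h2.pow (2 * j))).const_mul C
  simpa using this
end
end
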